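/- Let d ≥ 2 and define S(x) = (1/d) · Σ_{k=1}^d max{x_j : j ≠ k} for x ∈ [0,1]^d. Then the infimum over (β₀, β) ∈ ℝ² of sup_{x ∈ [0,1]^d} |max_i x_i − β₀ − β·S(x)| equals 1/(2d), attained at β₀ = 1/(2d), β = 1. -/

import Mathlib

/-!
If `i` is a coordinate where `x` attains its maximum, then every leave-one-out maximum except the
one omitting `i` equals `x i`, so `∑ₖ max_{j ≠ k} x j = (d - 1) x i + m` with `m` the second largest
coordinate. Hence `max x - S x = (x i - m) / d ∈ [0, 1/d]` on the cube, and `β₀ = 1/(2d)`, `β = 1`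
has error at most `1/(2d)`. Conversely the constant vector `(d-1)/d` and a standard basis vector
have the same value `(d-1)/d` of `S` but maxima differing by `1/d`, so any affine function of `S`
misses one of them by at least `1/(2d)`.
-/

open Finset Set

theorem Pi.single_one_mem_Icc {ι : Type*} [DecidableEq ι] (i j : ι) :
    (Pi.single i 1 : ι → ℝ) j ∈ Icc (0 : ℝ) 1 := by
  rcases eq_or_ne j i with rfl | hj <;> simp [*]

namespace LeaveOneOut

variable {ι : Type*} [Fintype ι] {x : ι → ℝ} {i : ι}

section Nonempty

variable [Nonempty ι]

noncomputable def maxAll (x : ι → ℝ) : ℝ :=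
  univ.sup' univ_nonempty x

theorem maxAll_eq_of_forall_le (hi : ∀ j, x j ≤ x i) : maxAll x = x i :=
  le_antisymm (sup'_le _ _ fun j _ => hi j) (le_sup' x (mem_univ i))

theorem maxAll_mem_Icc (hx : ∀ j, x j ∈ Icc (0 : ℝ) 1) : maxAll x ∈ Icc (0 : ℝ) 1 := by
  obtain ⟨i, hi⟩ := Finite.exists_max x
  rw [maxAll_eq_of_forall_le hi]
  exact hx i

theorem maxAll_const (c : ℝ) : maxAll (fun _ : ι => c) = c :=
  sup'_const _ _

theorem maxAll_single [DecidableEq ι] (i : ι) : maxAll (Pi.single i 1 : ι → ℝ) = 1 := by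
  rw [maxAll_eq_of_forall_le (i := i) fun j => by simpa using (Pi.single_one_mem_Icc i j).2]
  simp

theorem one_div_card_mem_Icc : 1 / (Fintype.card ι : ℝ) ∈ Icc (0 : ℝ) 1 :=
  ⟨by positivity, div_le_one_of_le₀ (Nat.one_le_cast.mpr Fintype.card_pos) (by positivity)⟩

end Nonempty

variable [DecidableEq ι] [Nontrivial ι]

noncomputable def maxExcept (k : ι) (x : ι → ℝ) : ℝ :=
  (univ.erase k).sup' univ_nontrivial.erase_nonempty x

noncomputable def meanMaxExcept (x : ι → ℝ) : ℝ :=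
  1 / (Fintype.card ι : ℝ) * ∑ k, maxExcept k x

variable (ι) in
noncomputable def errSup (β₀ β : ℝ) : ℝ :=
  ⨆ x : {x : ι → ℝ // ∀ i, x i ∈ Icc (0 : ℝ) 1}, |maxAll x.1 - β₀ - β * meanMaxExcept x.1|

theorem maxExcept_le_of_forall_le (hi : ∀ j, x j ≤ x i) (k : ι) : maxExcept k x ≤ x i :=
  sup'_le _ _ fun j _ => hi j

theorem maxExcept_eq_of_forall_le (hi : ∀ j, x j ≤ x i) {k : ι} (hk : k ≠ i) :
    maxExcept k x = x i :=
  le_antisymm (maxExcept_le_of_forall_le hi k) (le_sup' x (mem_erase.mpr ⟨hk.symm, mem_univ i⟩))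

theorem sum_maxExcept_of_forall_le (hi : ∀ j, x j ≤ x i) :
    ∑ k, maxExcept k x = (Fintype.card ι - 1) * x i + maxExcept i x := by
  rw [← sum_erase_add _ _ (mem_univ i),
    sum_congr rfl fun k hk => maxExcept_eq_of_forall_le hi (ne_of_mem_erase hk), sum_const,
    card_erase_of_mem (mem_univ i), card_univ, nsmul_eq_mul,
    Nat.cast_sub Fintype.card_pos, Nat.cast_one]

theorem maxAll_sub_meanMaxExcept (hi : ∀ j, x j ≤ x i) :
    maxAll x - meanMaxExcept x = (x i - maxExcept i x) / Fintype.card ι := by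
  have hcard : (Fintype.card ι : ℝ) ≠ 0 := by positivity
  rw [meanMaxExcept, sum_maxExcept_of_forall_le hi, maxAll_eq_of_forall_le hi]
  field_simp
  ring

theorem meanMaxExcept_const (c : ℝ) : meanMaxExcept (fun _ : ι => c) = c := by
  have hcard : (Fintype.card ι : ℝ) ≠ 0 := by positivity
  simp only [meanMaxExcept, maxExcept, sup'_const, sum_const, card_univ, nsmul_eq_mul]
  field_simp

theorem meanMaxExcept_single (i : ι) :
    meanMaxExcept (Pi.single i (1 : ℝ)) = 1 - 1 / Fintype.card ι := by
  have hi : ∀ j, (Pi.single i 1 : ι → ℝ) j ≤ (Pi.single i 1 : ι → ℝ) i := fun j => by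
    simpa using (Pi.single_one_mem_Icc i j).2
  have hzero : maxExcept i (Pi.single i (1 : ℝ)) = 0 :=
    sup'_eq_of_forall _ _ fun j hj => Pi.single_eq_of_ne (ne_of_mem_erase hj) _
  have hcard : (Fintype.card ι : ℝ) ≠ 0 := by positivity
  rw [meanMaxExcept, sum_maxExcept_of_forall_le hi, hzero]
  field_simp
  simp

theorem sub_maxExcept_mem_Icc (hx : ∀ j, x j ∈ Icc (0 : ℝ) 1) (hi : ∀ j, x j ≤ x i) :
    x i - maxExcept i x ∈ Icc (0 : ℝ) 1 := by
  obtain ⟨j, hj⟩ := (univ_nontrivial (α := ι)).erase_nonempty (a := i)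
  have hnonneg : 0 ≤ maxExcept i x := (hx j).1.trans (le_sup' x hj)
  exact ⟨sub_nonneg.mpr (maxExcept_le_of_forall_le hi i), by linarith [(hx i).2]⟩

theorem maxAll_sub_meanMaxExcept_mem_Icc (hx : ∀ j, x j ∈ Icc (0 : ℝ) 1) :
    maxAll x - meanMaxExcept x ∈ Icc (0 : ℝ) (1 / Fintype.card ι) := by
  obtain ⟨i, hi⟩ := Finite.exists_max x
  obtain ⟨h₀, h₁⟩ := sub_maxExcept_mem_Icc hx hi
  rw [maxAll_sub_meanMaxExcept hi]
  exact ⟨by positivity, div_le_div_of_nonneg_right h₁ (by positivity)⟩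

theorem abs_maxAll_sub_sub_meanMaxExcept_le (hx : ∀ j, x j ∈ Icc (0 : ℝ) 1) :
    |maxAll x - 1 / (2 * Fintype.card ι) - meanMaxExcept x| ≤ 1 / (2 * Fintype.card ι) := by
  obtain ⟨h₀, h₁⟩ := maxAll_sub_meanMaxExcept_mem_Icc hx
  have hhalf : 1 / (Fintype.card ι : ℝ) = 2 * (1 / (2 * Fintype.card ι)) := by
    field_simp
  rw [abs_le]
  constructor <;> linarith

theorem abs_maxAll_sub_sub_mul_meanMaxExcept_le (hx : ∀ j, x j ∈ Icc (0 : ℝ) 1) (β₀ β : ℝ) :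
    |maxAll x - β₀ - β * meanMaxExcept x| ≤ 1 + |β₀| + |β| := by
  obtain ⟨hM₀, hM₁⟩ := maxAll_mem_Icc hx
  obtain ⟨hD₀, hD₁⟩ := maxAll_sub_meanMaxExcept_mem_Icc hx
  have hS : |meanMaxExcept x| ≤ 1 := by
    rw [abs_le]
    constructor <;> linarith [(one_div_card_mem_Icc (ι := ι)).2]
  calc |maxAll x - β₀ - β * meanMaxExcept x|
      ≤ |maxAll x| + |β₀| + |β| * |meanMaxExcept x| := by
        rw [← abs_mul]
        linarith [abs_sub (maxAll x - β₀) (β * meanMaxExcept x), abs_sub (maxAll x) β₀]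
    _ ≤ 1 + |β₀| + |β| := by
        rw [abs_of_nonneg hM₀]
        nlinarith [abs_nonneg β]

theorem abs_maxAll_sub_sub_mul_meanMaxExcept_le_errSup (hx : ∀ j, x j ∈ Icc (0 : ℝ) 1)
    (β₀ β : ℝ) : |maxAll x - β₀ - β * meanMaxExcept x| ≤ errSup ι β₀ β := by
  refine le_ciSup (f := fun y : {x : ι → ℝ // ∀ i, x i ∈ Icc (0 : ℝ) 1} =>
    |maxAll y.1 - β₀ - β * meanMaxExcept y.1|) ⟨1 + |β₀| + |β|, ?_⟩ ⟨x, hx⟩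
  rintro _ ⟨y, rfl⟩
  exact abs_maxAll_sub_sub_mul_meanMaxExcept_le y.2 β₀ β

theorem errSup_le : errSup ι (1 / (2 * Fintype.card ι)) 1 ≤ 1 / (2 * Fintype.card ι) :=
  Real.iSup_le (fun x => by rw [one_mul]; exact abs_maxAll_sub_sub_meanMaxExcept_le x.2)
    (by positivity)

theorem le_errSup (β₀ β : ℝ) : 1 / (2 * Fintype.card ι) ≤ errSup ι β₀ β := by
  obtain ⟨i⟩ := (inferInstance : Nonempty ι)
  obtain ⟨hn₀, hn₁⟩ := one_div_card_mem_Icc (ι := ι)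
  have hc : 1 - 1 / (Fintype.card ι : ℝ) ∈ Icc (0 : ℝ) 1 := ⟨by linarith, by linarith⟩
  have hconst := abs_maxAll_sub_sub_mul_meanMaxExcept_le_errSup (fun _ : ι => hc) β₀ β
  have hbasis := abs_maxAll_sub_sub_mul_meanMaxExcept_le_errSup (Pi.single_one_mem_Icc i) β₀ β
  rw [maxAll_const, meanMaxExcept_const] at hconst
  rw [maxAll_single, meanMaxExcept_single] at hbasis
  have hhalf : 1 / (Fintype.card ι : ℝ) = 2 * (1 / (2 * Fintype.card ι)) := by
    field_simp
  linarith [le_abs_self (1 - β₀ - β * (1 - 1 / (Fintype.card ι : ℝ))),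
    neg_abs_le (1 - 1 / (Fintype.card ι : ℝ) - β₀ - β * (1 - 1 / (Fintype.card ι : ℝ)))]

end LeaveOneOut

open LeaveOneOut in
theorem stmt7 (d : ℕ) (hd : 2 ≤ d)
    (S : (Fin d → ℝ) → ℝ)
    (hS : ∀ x, S x = (1 / (d : ℝ)) *
        ∑ k : Fin d, (Finset.univ.erase k).sup' (Finset.card_pos.mp (by
            rw [Finset.card_erase_of_mem (Finset.mem_univ k), Finset.card_univ,
              Fintype.card_fin]; omega)) x)
    (E : ℝ → ℝ → ℝ)
    (hE : ∀ β₀ β, E β₀ β = ⨆ x : {x : Fin d → ℝ // ∀ i, x i ∈ Set.Icc (0 : ℝ) 1},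
        |Finset.univ.sup' (Finset.univ_nonempty_iff.mpr
            (Fin.pos_iff_nonempty.mp (by omega))) x.1 - β₀ - β * S x.1|) :
    (∀ β₀ β : ℝ, 1 / (2 * d) ≤ E β₀ β) ∧ E (1 / (2 * d)) 1 = 1 / (2 * d) := by
  have : Nontrivial (Fin d) := Fin.nontrivial_iff_two_le.mpr hd
  have hS' : S = meanMaxExcept := funext fun x => by
    simp only [hS, meanMaxExcept, Fintype.card_fin]
    rfl
  have hE' : E = errSup (Fin d) := funext₂ fun β₀ β => by rw [hE, hS']; rfl
  have hcard : (Fintype.card (Fin d) : ℝ) = d := by rw [Fintype.card_fin]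
  have hlower : ∀ β₀ β : ℝ, 1 / (2 * d) ≤ E β₀ β := fun β₀ β => by
    rw [hE', ← hcard]; exact le_errSup β₀ β
  refine ⟨hlower, le_antisymm ?_ (hlower _ _)⟩
  rw [hE', ← hcard]
  exact errSup_le
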